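/- (One-dimensional USES with explicit constant, pure analysis form) Let p(x) = 1/(2cosh(x/2)) and fix Λ ≥ 0. Define C(Λ) := 2·max( ∫_0^∞ e^{-z²/2}dz + ∫_{-∞}^0 e^{-z²/2 - z√Λ/2}dz , ( ∫_{-∞}^0 e^{-z²/2}/cosh(z√Λ/2)dz + ∫_0^∞ e^{-z²/2 - z√Λ/2}dz )^{-1} · (1/2)·∫_ℝ e^{-z²/2}dz ). Then for all λ ∈ [0,Λ] and all y ∈ ℝ: (1/C(Λ))·p(y)·∫_ℝ e^{-z²/2}dz ≤ ∫_ℝ p(y+z√λ)e^{-z²/2}dz ≤ C(Λ)·p(y)·∫_ℝ e^{-z²/2}dz; in particular there exists a finite constant C ≥ 1, depending only on Λ, such that for all λ ∈ [0,Λ] and all y ∈ ℝ, (1/C)·p(y) ≤ ∫_ℝ p(y+z√λ)e^{-z²/2}dz / √(2π) ≤ C·p(y). -/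
import Mathlib

open Real MeasureTheory Set

private lemma gauss_integrable' : Integrable (fun z : ℝ => Real.exp (-z^2 / 2)) := by
  have h := integrable_exp_neg_mul_sq (by norm_num : (0:ℝ) < 1/2)
  have he : (fun z : ℝ => Real.exp (-z^2 / 2)) = fun z : ℝ => Real.exp (-(1/2) * z^2) := by
    funext z; congr 1; ring
  rw [he]; exact h

private lemma gauss_lin_integrable' (c : ℝ) :
    Integrable (fun z : ℝ => Real.exp (-z^2 / 2 - z * c / 2)) := by
  have h := (integrable_exp_neg_mul_sq (by norm_num : (0:ℝ) < 1/2)).comp_add_right (c/2)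
  have h2 := h.const_mul (Real.exp (c^2/8))
  have he : (fun z : ℝ => Real.exp (-z^2 / 2 - z * c / 2))
      = fun z : ℝ => Real.exp (c^2/8) * Real.exp (-(1/2) * (z + c/2)^2) := by
    funext z; rw [← Real.exp_add]; congr 1; ring
  rw [he]; exact h2

private lemma sinh_le_cosh' (x : ℝ) : Real.sinh x ≤ Real.cosh x := by
  have h := Real.cosh_sub_sinh x
  have := Real.exp_pos (-x)
  linarith

private lemma sinh_nonpos' {x : ℝ} (hx : x ≤ 0) : Real.sinh x ≤ 0 := by
  have := Real.sinh_le_sinh.mpr hx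
  simpa using this

private lemma sinh_nonneg' {x : ℝ} (hx : 0 ≤ x) : 0 ≤ Real.sinh x := by
  have := Real.sinh_le_sinh.mpr hx
  simpa using this

private lemma cosh_mul_exp_le' (y u : ℝ) (hy : 0 ≤ y) (hu : u ≤ 0) :
    Real.cosh (y/2) * Real.exp (u/2) ≤ Real.cosh ((y+u)/2) := by
  have h : (y+u)/2 = y/2 + u/2 := by ring
  rw [h, Real.cosh_add, ← Real.cosh_add_sinh, mul_add]
  have h1 : Real.sinh (u/2) ≤ 0 := sinh_nonpos' (by linarith)
  have h3 : Real.cosh (y/2) * Real.sinh (u/2) ≤ Real.sinh (y/2) * Real.sinh (u/2) :=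
    mul_le_mul_of_nonpos_right (sinh_le_cosh' (y/2)) h1
  linarith

private lemma cosh_le_mul_exp' (y u : ℝ) (hy : 0 ≤ y) (hu : 0 ≤ u) :
    Real.cosh ((y+u)/2) ≤ Real.cosh (y/2) * Real.exp (u/2) := by
  have h : (y+u)/2 = y/2 + u/2 := by ring
  rw [h, Real.cosh_add, ← Real.cosh_add_sinh, mul_add]
  have h1 : 0 ≤ Real.sinh (u/2) := sinh_nonneg' (by linarith)
  have h3 : Real.sinh (y/2) * Real.sinh (u/2) ≤ Real.cosh (y/2) * Real.sinh (u/2) :=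
    mul_le_mul_of_nonneg_right (sinh_le_cosh' (y/2)) h1
  linarith

private lemma cosh_le_mul_cosh' (y u : ℝ) (hy : 0 ≤ y) (hu : u ≤ 0) :
    Real.cosh ((y+u)/2) ≤ Real.cosh (y/2) * Real.cosh (u/2) := by
  have h : (y+u)/2 = y/2 + u/2 := by ring
  rw [h, Real.cosh_add]
  have h1 : Real.sinh (u/2) ≤ 0 := sinh_nonpos' (by linarith)
  have h2 : 0 ≤ Real.sinh (y/2) := sinh_nonneg' (by linarith)
  nlinarith

private lemma cosh_le_cosh_add' (y u : ℝ) (hy : 0 ≤ y) (hu : 0 ≤ u) :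
    Real.cosh (y/2) ≤ Real.cosh ((y+u)/2) := by
  rw [Real.cosh_le_cosh, abs_of_nonneg (by linarith), abs_of_nonneg (by linarith)]
  linarith

set_option maxHeartbeats 2000000 in
theorem logistic_uses_one_dim (Λ : ℝ) (hΛ : 0 ≤ Λ)
    (p : ℝ → ℝ) (hp : p = fun x => 1 / (2 * Real.cosh (x / 2)))
    (C : ℝ)
    (hC : C = 2 * max
        ((∫ z in Set.Ioi (0:ℝ), Real.exp (-z^2 / 2))
          + ∫ z in Set.Iio (0:ℝ), Real.exp (-z^2 / 2 - z * Real.sqrt Λ / 2))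
        (((∫ z in Set.Iio (0:ℝ), Real.exp (-z^2 / 2) / Real.cosh (z * Real.sqrt Λ / 2))
            + ∫ z in Set.Ioi (0:ℝ), Real.exp (-z^2 / 2 - z * Real.sqrt Λ / 2))⁻¹
          * ((1/2) * ∫ z : ℝ, Real.exp (-z^2 / 2)))) :
    (∀ lam ∈ Set.Icc (0:ℝ) Λ, ∀ y : ℝ,
      (1 / C) * p y * ∫ z : ℝ, Real.exp (-z^2 / 2)
          ≤ ∫ z : ℝ, p (y + z * Real.sqrt lam) * Real.exp (-z^2 / 2) ∧
      (∫ z : ℝ, p (y + z * Real.sqrt lam) * Real.exp (-z^2 / 2))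
          ≤ C * p y * ∫ z : ℝ, Real.exp (-z^2 / 2)) ∧
    (∃ C' : ℝ, 1 ≤ C' ∧ ∀ lam ∈ Set.Icc (0:ℝ) Λ, ∀ y : ℝ,
      (1 / C') * p y
          ≤ (∫ z : ℝ, p (y + z * Real.sqrt lam) * Real.exp (-z^2 / 2))
              / Real.sqrt (2 * Real.pi) ∧
      (∫ z : ℝ, p (y + z * Real.sqrt lam) * Real.exp (-z^2 / 2))
              / Real.sqrt (2 * Real.pi) ≤ C' * p y) := by
  have hpval : ∀ x : ℝ, p x = 1 / (2 * Real.cosh (x / 2)) := fun x => by rw [hp]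
  have hppos : ∀ x : ℝ, 0 < p x := by
    intro x; rw [hpval]; positivity
  have hple : ∀ x : ℝ, p x ≤ 1/2 := by
    intro x; rw [hpval]
    rw [div_le_div_iff₀ (by positivity) (by norm_num)]
    nlinarith [Real.one_le_cosh (x/2)]
  have hpeven : ∀ x : ℝ, p (-x) = p x := by
    intro x; rw [hpval, hpval]
    rw [show (-x)/2 = -(x/2) by ring, Real.cosh_neg]
  have hpcont : Continuous p := by
    rw [hp]
    apply Continuous.div continuous_const
    · exact continuous_const.mul (Real.continuous_cosh.comp (continuous_id.div_const 2))
    · intro x; positivity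
  have hp_up1 : ∀ y u : ℝ, 0 ≤ y → 0 ≤ u → p (y + u) ≤ p y := by
    intro y u hy hu
    rw [hpval, hpval]
    have h := cosh_le_cosh_add' y u hy hu
    have h1 := Real.cosh_pos (y/2)
    have h2 := Real.cosh_pos ((y+u)/2)
    rw [div_le_div_iff₀ (by positivity) (by positivity)]
    nlinarith
  have hp_up2 : ∀ y u : ℝ, 0 ≤ y → u ≤ 0 → p (y + u) ≤ p y * Real.exp (-u/2) := by
    intro y u hy hu
    rw [hpval, hpval]
    have h := cosh_mul_exp_le' y u hy hu
    have h1 := Real.cosh_pos (y/2)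
    have h2 := Real.cosh_pos ((y+u)/2)
    have he : Real.exp (u/2) * Real.exp (-u/2) = 1 := by
      rw [← Real.exp_add, show u/2 + -u/2 = 0 by ring, Real.exp_zero]
    have hepos := Real.exp_pos (u/2)
    have hepos' := Real.exp_pos (-u/2)
    rw [div_mul_eq_mul_div, one_mul, div_le_div_iff₀ (by positivity) (by positivity)]
    nlinarith
  have hp_lo1 : ∀ y u : ℝ, 0 ≤ y → 0 ≤ u → p y * Real.exp (-u/2) ≤ p (y + u) := by
    intro y u hy hu
    rw [hpval, hpval]
    have h := cosh_le_mul_exp' y u hy hu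
    have h1 := Real.cosh_pos (y/2)
    have h2 := Real.cosh_pos ((y+u)/2)
    have he : Real.exp (u/2) * Real.exp (-u/2) = 1 := by
      rw [← Real.exp_add, show u/2 + -u/2 = 0 by ring, Real.exp_zero]
    have hepos := Real.exp_pos (u/2)
    have hepos' := Real.exp_pos (-u/2)
    rw [div_mul_eq_mul_div, one_mul, div_le_div_iff₀ (by positivity) (by positivity)]
    nlinarith
  have hp_lo2 : ∀ y u : ℝ, 0 ≤ y → u ≤ 0 → p y / Real.cosh (u/2) ≤ p (y + u) := by
    intro y u hy hu
    rw [hpval, hpval]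
    have h := cosh_le_mul_cosh' y u hy hu
    have h1 := Real.cosh_pos (y/2)
    have h2 := Real.cosh_pos ((y+u)/2)
    have h3 := Real.cosh_pos (u/2)
    rw [div_div, div_le_div_iff₀ (by positivity) (by positivity)]
    nlinarith
  set S := Real.sqrt Λ with hSdef
  have hS0 : 0 ≤ S := Real.sqrt_nonneg _
  set G := ∫ z : ℝ, Real.exp (-z^2 / 2) with hGdef
  set A := (∫ z in Set.Ioi (0:ℝ), Real.exp (-z^2 / 2))
      + ∫ z in Set.Iio (0:ℝ), Real.exp (-z^2 / 2 - z * S / 2) with hAdef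
  set D := (∫ z in Set.Iio (0:ℝ), Real.exp (-z^2 / 2) / Real.cosh (z * S / 2))
      + ∫ z in Set.Ioi (0:ℝ), Real.exp (-z^2 / 2 - z * S / 2) with hDdef
  have cgauss : Continuous fun z : ℝ => Real.exp (-z^2 / 2) :=
    Real.continuous_exp.comp (((continuous_pow 2).neg).div_const 2)
  have iG : Integrable (fun z : ℝ => Real.exp (-z^2 / 2)) := gauss_integrable'
  have iGL : ∀ c : ℝ, Integrable (fun z : ℝ => Real.exp (-z^2 / 2 - z * c / 2)) :=
    gauss_lin_integrable'
  have icosh : Integrable (fun z : ℝ => Real.exp (-z^2 / 2) / Real.cosh (z * S / 2)) := by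
    apply iG.mono
    · apply Continuous.aestronglyMeasurable
      apply Continuous.div cgauss
      · exact Real.continuous_cosh.comp ((continuous_id.mul continuous_const).div_const 2)
      · intro x; positivity
    · filter_upwards with z
      rw [Real.norm_eq_abs, Real.norm_eq_abs, abs_of_nonneg (by positivity),
        abs_of_nonneg (by positivity)]
      exact div_le_self (Real.exp_pos _).le (Real.one_le_cosh _)
  have hG : G = Real.sqrt (2 * Real.pi) := by
    rw [hGdef]
    have he : (fun z : ℝ => Real.exp (-z^2 / 2)) = fun z : ℝ => Real.exp (-(1/2) * z^2) := by
      funext z; congr 1; ring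
    rw [he, integral_gaussian]
    congr 1
    ring
  have hGpos : 0 < G := by
    rw [hG]; exact Real.sqrt_pos.mpr (by positivity)
  have hG1 : 1 ≤ G := by
    rw [hG, show (1:ℝ) = Real.sqrt 1 from (Real.sqrt_one).symm]
    apply Real.sqrt_le_sqrt
    nlinarith [Real.pi_gt_three]
  have hAgeG : G ≤ A := by
    have h1 : (∫ z in Set.Iio (0:ℝ), Real.exp (-z^2 / 2))
        ≤ ∫ z in Set.Iio (0:ℝ), Real.exp (-z^2 / 2 - z * S / 2) := by
      apply setIntegral_mono_on iG.integrableOn (iGL S).integrableOn measurableSet_Iio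
      intro z hz
      apply Real.exp_le_exp.mpr
      simp only [Set.mem_Iio] at hz
      nlinarith
    have h2 : (∫ z in Set.Iio (0:ℝ), Real.exp (-z^2 / 2))
        + (∫ z in Set.Ici (0:ℝ), Real.exp (-z^2 / 2)) = G :=
      intervalIntegral.integral_Iio_add_Ici iG.integrableOn iG.integrableOn
    have h3 : (∫ z in Set.Ici (0:ℝ), Real.exp (-z^2 / 2))
        = ∫ z in Set.Ioi (0:ℝ), Real.exp (-z^2 / 2) := integral_Ici_eq_integral_Ioi
    rw [hAdef]; linarith
  have hApos : 0 < A := lt_of_lt_of_le hGpos hAgeG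
  have hDpos : 0 < D := by
    have h1 : 0 ≤ ∫ z in Set.Iio (0:ℝ), Real.exp (-z^2 / 2) / Real.cosh (z * S / 2) :=
      setIntegral_nonneg measurableSet_Iio (fun z _ => by positivity)
    have h2 : 0 < ∫ z in Set.Ioi (0:ℝ), Real.exp (-z^2 / 2 - z * S / 2) := by
      rw [setIntegral_pos_iff_support_of_nonneg_ae
        (Filter.Eventually.of_forall (fun z => (Real.exp_pos _).le)) (iGL S).integrableOn]
      have hsupp : Function.support (fun z : ℝ => Real.exp (-z^2 / 2 - z * S / 2))
          = Set.univ := by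
        ext z; simp [Function.mem_support, Real.exp_ne_zero]
      rw [hsupp, Set.univ_inter, Real.volume_Ioi]
      simp
    rw [hDdef]; linarith
  -- the main two-sided estimate
  have main : ∀ lam ∈ Set.Icc (0:ℝ) Λ, ∀ y : ℝ,
      p y * D ≤ (∫ z : ℝ, p (y + z * Real.sqrt lam) * Real.exp (-z^2 / 2)) ∧
      (∫ z : ℝ, p (y + z * Real.sqrt lam) * Real.exp (-z^2 / 2)) ≤ p y * A := by
    intro lam hlam
    set s := Real.sqrt lam with hsdef
    have hs0 : 0 ≤ s := Real.sqrt_nonneg _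
    have hsS : s ≤ S := Real.sqrt_le_sqrt hlam.2
    have hfint : ∀ y : ℝ, Integrable (fun z : ℝ => p (y + z * s) * Real.exp (-z^2 / 2)) := by
      intro y
      apply (iG.const_mul (1/2)).mono
      · apply Continuous.aestronglyMeasurable
        exact (hpcont.comp (continuous_const.add (continuous_id.mul continuous_const))).mul cgauss
      · filter_upwards with z
        rw [Real.norm_eq_abs, Real.norm_eq_abs,
          abs_of_nonneg (mul_nonneg (hppos _).le (Real.exp_pos _).le),
          abs_of_nonneg (by positivity)]
        exact mul_le_mul_of_nonneg_right (hple _) (Real.exp_pos _).le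
    have hmain0 : ∀ y : ℝ, 0 ≤ y →
        p y * D ≤ (∫ z : ℝ, p (y + z * s) * Real.exp (-z^2 / 2)) ∧
        (∫ z : ℝ, p (y + z * s) * Real.exp (-z^2 / 2)) ≤ p y * A := by
      intro y hy
      have hsplit : (∫ z in Set.Iic (0:ℝ), p (y + z * s) * Real.exp (-z^2 / 2))
          + (∫ z in Set.Ioi (0:ℝ), p (y + z * s) * Real.exp (-z^2 / 2))
          = ∫ z : ℝ, p (y + z * s) * Real.exp (-z^2 / 2) :=
        intervalIntegral.integral_Iic_add_Ioi (hfint y).integrableOn (hfint y).integrableOn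
      have hIicIio : (∫ z in Set.Iic (0:ℝ), p (y + z * s) * Real.exp (-z^2 / 2))
          = ∫ z in Set.Iio (0:ℝ), p (y + z * s) * Real.exp (-z^2 / 2) :=
        integral_Iic_eq_integral_Iio
      constructor
      · -- lower bound
        have l1 : (∫ z in Set.Ioi (0:ℝ), p y * Real.exp (-z^2 / 2 - z * S / 2))
            ≤ ∫ z in Set.Ioi (0:ℝ), p (y + z * s) * Real.exp (-z^2 / 2) := by
          apply setIntegral_mono_on (((iGL S).const_mul (p y)).integrableOn)
            (hfint y).integrableOn measurableSet_Ioi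
          intro z hz
          simp only [Set.mem_Ioi] at hz
          have hzs : 0 ≤ z * s := mul_nonneg hz.le hs0
          have step1 : p y * Real.exp (-(z * s)/2) ≤ p (y + z * s) := hp_lo1 y (z*s) hy hzs
          have step2 : Real.exp (-z^2 / 2 - z * S / 2)
              ≤ Real.exp (-(z * s)/2) * Real.exp (-z^2/2) := by
            rw [← Real.exp_add]
            apply Real.exp_le_exp.mpr
            nlinarith [mul_le_mul_of_nonneg_left hsS hz.le]
          calc p y * Real.exp (-z^2 / 2 - z * S / 2)
              ≤ p y * (Real.exp (-(z * s)/2) * Real.exp (-z^2/2)) :=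
                mul_le_mul_of_nonneg_left step2 (hppos y).le
            _ = (p y * Real.exp (-(z * s)/2)) * Real.exp (-z^2/2) := by ring
            _ ≤ p (y + z * s) * Real.exp (-z^2 / 2) :=
                mul_le_mul_of_nonneg_right step1 (Real.exp_pos _).le
        have l2 : (∫ z in Set.Iio (0:ℝ), p y * (Real.exp (-z^2 / 2) / Real.cosh (z * S / 2)))
            ≤ ∫ z in Set.Iio (0:ℝ), p (y + z * s) * Real.exp (-z^2 / 2) := by
          apply setIntegral_mono_on ((icosh.const_mul (p y)).integrableOn)
            (hfint y).integrableOn measurableSet_Iio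
          intro z hz
          simp only [Set.mem_Iio] at hz
          have hzs : z * s ≤ 0 := by nlinarith
          have hcosh : Real.cosh (z * s / 2) ≤ Real.cosh (z * S / 2) := by
            rw [Real.cosh_le_cosh, abs_div, abs_div, abs_mul, abs_mul,
              abs_of_nonneg hs0, abs_of_nonneg hS0]
            gcongr
          have step1 : p y / Real.cosh (z * s / 2) ≤ p (y + z * s) := hp_lo2 y (z*s) hy hzs
          have step2 : p y / Real.cosh (z * S / 2) ≤ p y / Real.cosh (z * s / 2) := by
            gcongr
            exact (hppos y).le
          calc p y * (Real.exp (-z^2 / 2) / Real.cosh (z * S / 2))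
              = (p y / Real.cosh (z * S / 2)) * Real.exp (-z^2 / 2) := by ring
            _ ≤ (p y / Real.cosh (z * s / 2)) * Real.exp (-z^2 / 2) :=
                mul_le_mul_of_nonneg_right step2 (Real.exp_pos _).le
            _ ≤ p (y + z * s) * Real.exp (-z^2 / 2) :=
                mul_le_mul_of_nonneg_right step1 (Real.exp_pos _).le
        have e1 : (∫ z in Set.Ioi (0:ℝ), p y * Real.exp (-z^2 / 2 - z * S / 2))
            = p y * ∫ z in Set.Ioi (0:ℝ), Real.exp (-z^2 / 2 - z * S / 2) :=
          integral_const_mul _ _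
        have e2 : (∫ z in Set.Iio (0:ℝ), p y * (Real.exp (-z^2 / 2) / Real.cosh (z * S / 2)))
            = p y * ∫ z in Set.Iio (0:ℝ), Real.exp (-z^2 / 2) / Real.cosh (z * S / 2) :=
          integral_const_mul _ _
        rw [e1] at l1; rw [e2] at l2
        rw [hDdef, mul_add, ← hsplit, hIicIio]
        linarith
      · -- upper bound
        have u1 : (∫ z in Set.Ioi (0:ℝ), p (y + z * s) * Real.exp (-z^2 / 2))
            ≤ ∫ z in Set.Ioi (0:ℝ), p y * Real.exp (-z^2 / 2) := by
          apply setIntegral_mono_on (hfint y).integrableOn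
            ((iG.const_mul (p y)).integrableOn) measurableSet_Ioi
          intro z hz
          simp only [Set.mem_Ioi] at hz
          exact mul_le_mul_of_nonneg_right
            (hp_up1 y (z*s) hy (mul_nonneg hz.le hs0)) (Real.exp_pos _).le
        have u2 : (∫ z in Set.Iic (0:ℝ), p (y + z * s) * Real.exp (-z^2 / 2))
            ≤ ∫ z in Set.Iic (0:ℝ), p y * Real.exp (-z^2 / 2 - z * S / 2) := by
          apply setIntegral_mono_on (hfint y).integrableOn
            (((iGL S).const_mul (p y)).integrableOn) measurableSet_Iic
          intro z hz
          simp only [Set.mem_Iic] at hz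
          have hzs : z * s ≤ 0 := by nlinarith
          have step1 : p (y + z * s) ≤ p y * Real.exp (-(z * s)/2) := hp_up2 y (z*s) hy hzs
          have step2 : Real.exp (-(z * s)/2) ≤ Real.exp (-(z * S)/2) := by
            apply Real.exp_le_exp.mpr
            nlinarith [mul_le_mul_of_nonpos_left hsS hz]
          calc p (y + z * s) * Real.exp (-z^2 / 2)
              ≤ (p y * Real.exp (-(z * s)/2)) * Real.exp (-z^2 / 2) :=
                mul_le_mul_of_nonneg_right step1 (Real.exp_pos _).le
            _ ≤ (p y * Real.exp (-(z * S)/2)) * Real.exp (-z^2 / 2) := by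
                apply mul_le_mul_of_nonneg_right _ (Real.exp_pos _).le
                exact mul_le_mul_of_nonneg_left step2 (hppos y).le
            _ = p y * Real.exp (-z^2 / 2 - z * S / 2) := by
                rw [mul_assoc, ← Real.exp_add]
                congr 2
                ring
        have e1 : (∫ z in Set.Ioi (0:ℝ), p y * Real.exp (-z^2 / 2))
            = p y * ∫ z in Set.Ioi (0:ℝ), Real.exp (-z^2 / 2) :=
          integral_const_mul _ _
        have e2 : (∫ z in Set.Iic (0:ℝ), p y * Real.exp (-z^2 / 2 - z * S / 2))
            = p y * ∫ z in Set.Iio (0:ℝ), Real.exp (-z^2 / 2 - z * S / 2) := by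
          rw [integral_Iic_eq_integral_Iio]
          exact integral_const_mul _ _
        rw [e1] at u1; rw [e2] at u2
        rw [hAdef, mul_add, ← hsplit]
        linarith
    -- symmetry
    have hsymm : ∀ y : ℝ,
        (∫ z : ℝ, p (y + z * s) * Real.exp (-z^2 / 2))
          = ∫ z : ℝ, p (-y + z * s) * Real.exp (-z^2 / 2) := by
      intro y
      have h := integral_neg_eq_self
        (fun z : ℝ => p (-y + z * s) * Real.exp (-z^2 / 2)) (volume : Measure ℝ)
      rw [← h]
      congr 1
      funext z
      show p (y + z * s) * Real.exp (-z^2 / 2) = p (-y + -z * s) * Real.exp (-(-z)^2 / 2)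
      rw [show -y + -z * s = -(y + z * s) by ring, hpeven, show -(-z:ℝ)^2 = -z^2 by ring]
    intro y
    rcases le_or_gt 0 y with hy | hy
    · exact hmain0 y hy
    · have h := hmain0 (-y) (by linarith)
      rw [hpeven y] at h
      rw [hsymm y]
      exact h
  -- constants
  have hCgeInv : D⁻¹ * G ≤ C := by
    have h := le_max_right A (D⁻¹ * ((1/2) * G))
    rw [hC]; linarith
  have hCgeA : A ≤ C := by
    have hmax : (0:ℝ) < A ⊔ D⁻¹ * ((1/2) * G) := lt_of_lt_of_le hApos (le_max_left _ _)
    rw [hC]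
    calc A ≤ A ⊔ D⁻¹ * ((1/2) * G) := le_max_left _ _
      _ ≤ (A ⊔ D⁻¹ * ((1/2) * G)) + (A ⊔ D⁻¹ * ((1/2) * G)) := le_add_of_nonneg_left hmax.le
      _ = 2 * (A ⊔ D⁻¹ * ((1/2) * G)) := (two_mul _).symm
  have hCpos : 0 < C :=
    lt_of_lt_of_le (mul_pos (inv_pos.mpr hDpos) hGpos) hCgeInv
  have hGC : G ≤ C * D := by
    have h := mul_le_mul_of_nonneg_right hCgeInv hDpos.le
    rwa [mul_comm D⁻¹ G, mul_assoc, inv_mul_cancel₀ hDpos.ne', mul_one] at h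
  have hC1 : 1 ≤ C := le_trans hG1 (le_trans hAgeG hCgeA)
  have part1 : ∀ lam ∈ Set.Icc (0:ℝ) Λ, ∀ y : ℝ,
      (1 / C) * p y * G
          ≤ (∫ z : ℝ, p (y + z * Real.sqrt lam) * Real.exp (-z^2 / 2)) ∧
      (∫ z : ℝ, p (y + z * Real.sqrt lam) * Real.exp (-z^2 / 2)) ≤ C * p y * G := by
    intro lam hlam y
    obtain ⟨hlo, hup⟩ := main lam hlam y
    constructor
    · have hkey : (1 / C) * p y * G ≤ p y * D := by
        rw [div_mul_eq_mul_div, one_mul, div_mul_eq_mul_div, div_le_iff₀ hCpos]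
        calc p y * G ≤ p y * (C * D) := mul_le_mul_of_nonneg_left hGC (hppos y).le
          _ = p y * D * C := by ring
      linarith
    · have h1 : p y * A ≤ p y * C := mul_le_mul_of_nonneg_left hCgeA (hppos y).le
      have h2 : p y * C ≤ p y * C * G := le_mul_of_one_le_right (mul_nonneg (hppos y).le hCpos.le) hG1
      calc (∫ z : ℝ, p (y + z * Real.sqrt lam) * Real.exp (-z^2 / 2))
          ≤ p y * A := hup
        _ ≤ p y * C * G := by linarith
        _ = C * p y * G := by ring
  refine ⟨part1, C, hC1, ?_⟩
  intro lam hlam y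
  obtain ⟨h1, h2⟩ := part1 lam hlam y
  constructor
  · rw [← hG, le_div_iff₀ hGpos]
    exact h1
  · rw [← hG, div_le_iff₀ hGpos]
    exact h2
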